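/- arXiv:1906.01804 — 5 statements merged into one kernel-verified Lean document; each statement's English description precedes it below -/
import Mathlib

section
/- Let 0 < α < 1 and let f : [1,∞) → [0,∞) be a measurable function with ∫₁^∞ f(t) t^{-α} dt < ∞. Then for every ε > 0 and every M > 0 there exists T > M such that ∫_{T - (1/(2α)) T^{1-α}}^{T} f(t) dt < ε. -/
open MeasureTheory Set

/-- Let `0 < α < 1` and let `f : [1,∞) → [0,∞)` be measurable with
`∫₁^∞ f(t) t^{-α} dt < ∞`. Then for every `ε > 0` and every `M > 0` there is `T > M`
with `∫_{T - (1/(2α)) T^{1-α}}^{T} f(t) dt < ε`. -/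
theorem stmt0 (α : ℝ) (hα0 : 0 < α) (hα1 : α < 1)
    (f : ℝ → ℝ) (hf_meas : Measurable f) (hf_nonneg : ∀ t, 1 ≤ t → 0 ≤ f t)
    (hf_int : IntegrableOn (fun t => f t * t ^ (-α)) (Ici (1 : ℝ)))
    (ε M : ℝ) (hε : 0 < ε) (hM : 0 < M) :
    ∃ T, M < T ∧ ∫ t in Icc (T - (1 / (2 * α)) * T ^ (1 - α)) T, f t < ε := by
  by_contra hcon
  push_neg at hcon
  set c : ℝ := 1 / (2 * α) with hc_def
  have hc : 0 < c := by positivity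
  set g : ℝ → ℝ := fun t => f t * t ^ (-α) with hg_def
  set T0 : ℝ := max (max (M + 1) 2) ((2 * c) ^ α⁻¹ + 1) with hT0_def
  have hT0M : M < T0 :=
    lt_of_lt_of_le (lt_add_one M) (le_max_of_le_left (le_max_left _ _))
  have hT0_2 : (2:ℝ) ≤ T0 := le_max_of_le_left (le_max_right _ _)
  have hT0_1 : (1:ℝ) ≤ T0 := le_trans one_le_two hT0_2
  have hT0_pos : (0:ℝ) < T0 := lt_of_lt_of_le one_pos hT0_1
  have hT0c : 2 * c ≤ T0 ^ α := by
    have h1 : (2 * c) ^ α⁻¹ ≤ T0 :=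
      le_trans (le_add_of_nonneg_right one_pos.le) (le_max_right _ _)
    calc 2 * c = ((2*c) ^ α⁻¹) ^ α := (Real.rpow_inv_rpow (by positivity) hα0.ne').symm
    _ ≤ T0 ^ α := Real.rpow_le_rpow (by positivity) h1 hα0.le
  -- the sequence
  let T : ℕ → ℝ := fun n => Nat.rec T0 (fun _ x => x + 2 * c * x ^ (1 - α)) n
  have hTsucc : ∀ n, T (n+1) = T n + 2 * c * (T n) ^ (1 - α) := fun n => rfl
  have hT_ge : ∀ n, T0 ≤ T n := by
    intro n
    induction n with
    | zero => exact le_refl _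
    | succ n ih =>
      rw [hTsucc]
      have h0 : 0 ≤ (T n) ^ (1-α) := Real.rpow_nonneg (le_trans hT0_pos.le ih) _
      nlinarith
  have hT_pos : ∀ n, 0 < T n := fun n => lt_of_lt_of_le hT0_pos (hT_ge n)
  have hT_1 : ∀ n, 1 ≤ T n := fun n => le_trans hT0_1 (hT_ge n)
  have hT_mono : ∀ n, T n ≤ T (n+1) := by
    intro n
    rw [hTsucc]
    nlinarith [Real.rpow_nonneg (hT_pos n).le (1-α)]
  have hT_le : ∀ m n, m ≤ n → T m ≤ T n := fun m n h =>
    monotone_nat_of_le_succ hT_mono h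
  have hkey : ∀ n, 2 * c * (T n) ^ (1 - α) ≤ T n := by
    intro n
    have h1 : 2 * c ≤ (T n) ^ α :=
      le_trans hT0c (Real.rpow_le_rpow hT0_pos.le (hT_ge n) hα0.le)
    have h2 : (T n) ^ α * (T n) ^ (1 - α) = T n := by
      rw [← Real.rpow_add (hT_pos n)]
      norm_num
    calc 2*c*(T n)^(1-α) ≤ (T n)^α * (T n)^(1-α) :=
          mul_le_mul_of_nonneg_right h1 (Real.rpow_nonneg (hT_pos n).le _)
    _ = T n := h2
  have hT2 : ∀ n, T (n+1) ≤ 2 * T n := by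
    intro n; rw [hTsucc]; linarith [hkey n]
  have hL : ∀ n, T n ≤ T (n+1) - c * (T (n+1)) ^ (1 - α) := by
    intro n
    have h1 : (T (n+1)) ^ (1-α) ≤ 2 * (T n) ^ (1-α) := by
      calc (T (n+1))^(1-α) ≤ (2 * T n)^(1-α) :=
            Real.rpow_le_rpow (hT_pos (n+1)).le (hT2 n) (by linarith)
      _ = 2^(1-α) * (T n)^(1-α) := Real.mul_rpow (by norm_num) (hT_pos n).le
      _ ≤ 2 * (T n)^(1-α) := by
          have h2 : (2:ℝ)^(1-α) ≤ 2^(1:ℝ) :=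
            Real.rpow_le_rpow_of_exponent_le one_le_two (by linarith)
          rw [Real.rpow_one] at h2
          exact mul_le_mul_of_nonneg_right h2 (Real.rpow_nonneg (hT_pos n).le _)
    have h3 : c * (T (n+1))^(1-α) ≤ c * (2 * (T n)^(1-α)) :=
      mul_le_mul_of_nonneg_left h1 hc.le
    have h4 := hTsucc n
    nlinarith
  have hgrow : ∀ n, (T (n+1)) ^ α ≤ (T n) ^ α + 1 := by
    intro n
    have hx := hT_pos n
    have hxx : T n * (T n) ^ (-α) = (T n) ^ (1 - α) := by
      rw [show (1 - α) = 1 + (-α) by ring, Real.rpow_add hx, Real.rpow_one]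
    have hu : T (n+1) = T n * (1 + 2 * c * (T n) ^ (-α)) := by
      rw [hTsucc]
      have : T n * (2 * c * (T n) ^ (-α)) = 2 * c * (T n) ^ (1 - α) := by
        rw [← hxx]; ring
      nlinarith [this]
    have hunn : 0 ≤ 2 * c * (T n) ^ (-α) := by positivity
    have hBern : (1 + 2*c*(T n)^(-α)) ^ α ≤ 1 + α * (2*c*(T n)^(-α)) :=
      rpow_one_add_le_one_add_mul_self (by linarith) hα0.le hα1.le
    have hcanc : (T n) ^ α * (T n) ^ (-α) = 1 := by
      rw [← Real.rpow_add hx]; simp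
    have hαc : α * (2 * c) = 1 := by
      rw [hc_def]; field_simp
    calc (T (n+1))^α = (T n)^α * (1 + 2*c*(T n)^(-α))^α := by
          rw [hu, Real.mul_rpow hx.le (by positivity)]
    _ ≤ (T n)^α * (1 + α*(2*c*(T n)^(-α))) :=
          mul_le_mul_of_nonneg_left hBern (Real.rpow_nonneg hx.le _)
    _ = (T n)^α + (α * (2*c)) * ((T n)^α * (T n)^(-α)) := by ring
    _ = (T n)^α + 1 := by rw [hcanc, hαc]; ring
  have hTα : ∀ n, (T n) ^ α ≤ T0 ^ α + n := by
    intro n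
    induction n with
    | zero => show T0 ^ α ≤ T0 ^ α + ((0:ℕ):ℝ); simp
    | succ n ih =>
      have := hgrow n
      push_cast
      push_cast at ih
      linarith
  have hg_nonneg : ∀ t ∈ Ici (1:ℝ), 0 ≤ g t := fun t ht =>
    mul_nonneg (hf_nonneg t ht) (Real.rpow_nonneg (by linarith [mem_Ici.mp ht]) _)
  set C : ℝ := ∫ t in Ici (1:ℝ), g t with hC_def
  have hP : (0:ℝ) < T0 ^ α + 1 := by positivity
  -- per-interval lower bound
  have hstep : ∀ n, ε / (T0^α + 1) * (1/(n+1)) ≤ ∫ t in (T n)..(T (n+1)), g t := by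
    intro n
    set a := T n with ha_def
    set b := T (n+1) with hb_def
    set L := b - c * b ^ (1 - α) with hL_def
    have hab : a ≤ b := hT_mono n
    have hLb : L ≤ b := by
      have h0 : 0 ≤ c * b ^ (1-α) := mul_nonneg hc.le (Real.rpow_nonneg (hT_pos (n+1)).le _)
      simp only [hL_def]; linarith
    have haL : a ≤ L := hL n
    have h1a : 1 ≤ a := hT_1 n
    have h1L : 1 ≤ L := le_trans h1a haL
    have hbM : M < b := lt_of_lt_of_le hT0M (hT_ge (n+1))
    have hbpos : 0 < b := hT_pos (n+1)
    have hbα : 0 < b ^ α := Real.rpow_pos_of_pos hbpos α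
    have hεb : ε ≤ ∫ t in Icc L b, f t := hcon b hbM
    have hsub1 : Icc L b ⊆ Ici (1:ℝ) := fun t ht => le_trans h1L ht.1
    have hgInt : IntegrableOn g (Icc L b) := hf_int.mono_set hsub1
    have hfg : ∀ t ∈ Icc L b, f t ≤ b^α * g t := by
      intro t ht
      have h1t : 1 ≤ t := hsub1 ht
      have htpos : 0 < t := lt_of_lt_of_le one_pos h1t
      have hcanc : t ^ (-α) * t ^ α = 1 := by
        rw [← Real.rpow_add htpos]; simp
      have h5 : t ^ α ≤ b ^ α := Real.rpow_le_rpow htpos.le ht.2 hα0.le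
      have h6 : 0 ≤ f t * t ^ (-α) := mul_nonneg (hf_nonneg t h1t) (Real.rpow_nonneg htpos.le _)
      calc f t = (f t * t ^ (-α)) * t ^ α := by
            rw [mul_assoc, hcanc, mul_one]
      _ ≤ (f t * t ^ (-α)) * b ^ α := mul_le_mul_of_nonneg_left h5 h6
      _ = b ^ α * g t := by rw [hg_def]; ring
    have hfInt : IntegrableOn f (Icc L b) := by
      apply Integrable.mono' (hgInt.const_mul (b^α)) hf_meas.aestronglyMeasurable
      refine ae_restrict_of_forall_mem measurableSet_Icc fun t ht => ?_
      rw [Real.norm_eq_abs, abs_of_nonneg (hf_nonneg t (hsub1 ht))]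
      exact hfg t ht
    have hmono1 : ∫ t in Icc L b, f t ≤ ∫ t in Icc L b, b^α * g t :=
      setIntegral_mono_on hfInt (hgInt.const_mul _) measurableSet_Icc hfg
    have hmul : ∫ t in Icc L b, b^α * g t = b^α * ∫ t in Icc L b, g t := by
      exact integral_const_mul _ _
    have hIcc : ε / b^α ≤ ∫ t in Icc L b, g t := by
      rw [div_le_iff₀ hbα]
      calc ε ≤ ∫ t in Icc L b, f t := hεb
      _ ≤ b^α * ∫ t in Icc L b, g t := by rw [← hmul]; exact hmono1
      _ = (∫ t in Icc L b, g t) * b^α := mul_comm _ _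
    have hsub2 : Ioc a b ⊆ Ici (1:ℝ) := fun t ht => le_trans h1a ht.1.le
    have hIoc : ∫ t in Icc L b, g t ≤ ∫ t in Ioc a b, g t := by
      rw [MeasureTheory.integral_Icc_eq_integral_Ioc]
      refine setIntegral_mono_set (hf_int.mono_set hsub2) ?_
        (HasSubset.Subset.eventuallyLE (Ioc_subset_Ioc_left haL))
      refine ae_restrict_of_forall_mem measurableSet_Ioc fun t ht => ?_
      exact hg_nonneg t (hsub2 ht)
    have hformula : ∫ t in a..b, g t = ∫ t in Ioc a b, g t :=
      intervalIntegral.integral_of_le hab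
    have hbest : ε / (T0^α + 1) * (1/(n+1)) ≤ ε / b^α := by
      have h7 : b ^ α ≤ T0^α + (n+1) := by
        have := hTα (n+1); push_cast at this ⊢; linarith
      have h8 : T0^α + ((n:ℝ)+1) ≤ (T0^α + 1) * ((n:ℝ)+1) := by
        have hn : (0:ℝ) ≤ (n:ℝ) := Nat.cast_nonneg n
        have h9 : (0:ℝ) ≤ T0^α := Real.rpow_nonneg hT0_pos.le _
        nlinarith
      have h10 : b ^ α ≤ ((n:ℝ)+1) * (T0^α + 1) := by
        rw [mul_comm]; exact le_trans h7 h8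
      rw [div_mul_eq_mul_div, mul_one_div, div_div]
      exact div_le_div_of_nonneg_left hε.le hbα h10
    calc ε / (T0^α + 1) * (1/(n+1)) ≤ ε / b^α := hbest
    _ ≤ ∫ t in Icc L b, g t := hIcc
    _ ≤ ∫ t in Ioc a b, g t := hIoc
    _ = ∫ t in a..b, g t := hformula.symm
  -- summation
  have hIntInt : ∀ n, IntervalIntegrable g volume (T n) (T (n+1)) := by
    intro n
    apply MeasureTheory.IntegrableOn.intervalIntegrable
    apply hf_int.mono_set
    rw [uIcc_of_le (hT_mono n)]
    exact fun t ht => le_trans (hT_1 n) ht.1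
  have hsum : ∀ N, ∑ n ∈ Finset.range N, ∫ t in (T n)..(T (n+1)), g t ≤ C := by
    intro N
    rw [intervalIntegral.sum_integral_adjacent_intervals (fun i _ => hIntInt i)]
    have h0N : T 0 ≤ T N := hT_le 0 N (Nat.zero_le N)
    rw [intervalIntegral.integral_of_le h0N]
    have hsub : Ioc (T 0) (T N) ⊆ Ici (1:ℝ) := fun t ht => le_trans (hT_1 0) ht.1.le
    refine setIntegral_mono_set hf_int ?_ (HasSubset.Subset.eventuallyLE hsub)
    exact ae_restrict_of_forall_mem measurableSet_Ici hg_nonneg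
  have hlower : ∀ N, ε / (T0^α + 1) * (∑ n ∈ Finset.range N, (1/((n:ℝ)+1))) ≤ C := by
    intro N
    rw [Finset.mul_sum]
    calc ∑ n ∈ Finset.range N, ε / (T0^α + 1) * (1/((n:ℝ)+1))
        ≤ ∑ n ∈ Finset.range N, ∫ t in (T n)..(T (n+1)), g t :=
          Finset.sum_le_sum fun n _ => hstep n
    _ ≤ C := hsum N
  -- contradiction via harmonic series
  have hdiv := Real.tendsto_sum_range_one_div_nat_succ_atTop
  obtain ⟨N, hN⟩ := (hdiv.eventually_gt_atTop (C * (T0^α + 1) / ε)).exists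
  have hk : 0 < ε / (T0^α + 1) := by positivity
  have h1 := hlower N
  have h2 : ε / (T0^α + 1) * (C * (T0^α + 1) / ε) = C := by
    field_simp
  have h3 := mul_lt_mul_of_pos_left hN hk
  rw [h2] at h3
  linarith
end

section
/- Let a ≥ 1 and b > -1 be real numbers. There exists a constant C = C(a,b) > 0 such that for all real numbers τ, T with 2 ≤ τ and 2τ ≤ T the following hold: if a = 1 then ∫₁^{T-τ} (T-s)^{-1} s^b ds ≤ C T^b log(T/τ); and if a > 1 then ∫₁^{T-τ} (T-s)^{-a} s^b ds ≤ C T^b τ^{1-a}. -/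
open MeasureTheory Set

lemma aux_key (a b τ T : ℝ) (ha : 1 ≤ a) (hb : -1 < b) (hτ : 2 ≤ τ) (hT : 2 * τ ≤ T) :
    ∫ s in Icc (1:ℝ) (T - τ), (T - s) ^ (-a) * s ^ b
      ≤ (2 ^ a + 2 ^ (-b) + 1) *
          (T ^ b * (T ^ (1 - a) / (b + 1)) + T ^ b * ∫ u in τ..(T - 1), u ^ (-a)) := by
  have hb1 : (0:ℝ) < b + 1 := by linarith
  have hτ0 : (0:ℝ) < τ := by linarith
  have hT0 : (0:ℝ) < T := by linarith
  have h1Tτ : (1:ℝ) ≤ T - τ := by linarith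
  set K : ℝ := 2 ^ a + 2 ^ (-b) + 1 with hKdef
  have hK0 : (0:ℝ) < K := by positivity
  have hTa : (0:ℝ) ≤ T ^ (-a) := Real.rpow_nonneg hT0.le _
  have hTb : (0:ℝ) ≤ T ^ b := Real.rpow_nonneg hT0.le _
  -- pointwise bound
  have hpt : ∀ s ∈ Icc (1:ℝ) (T - τ), (T - s) ^ (-a) * s ^ b
      ≤ K * (T ^ (-a) * s ^ b + T ^ b * (T - s) ^ (-a)) := by
    rintro s ⟨hs1, hs2⟩
    have hTs0 : (0:ℝ) < T - s := by linarith
    have hs0 : (0:ℝ) < s := by linarith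
    have hsb : (0:ℝ) ≤ s ^ b := Real.rpow_nonneg hs0.le _
    have hTsa : (0:ℝ) ≤ (T - s) ^ (-a) := Real.rpow_nonneg hTs0.le _
    have h2a : (0:ℝ) ≤ 2 ^ a := Real.rpow_nonneg (by norm_num) _
    have h2b : (0:ℝ) ≤ 2 ^ (-b) := Real.rpow_nonneg (by norm_num) _
    rcases le_or_gt s (T / 2) with h | h
    · have h2 : (T - s) ^ (-a) ≤ 2 ^ a * T ^ (-a) := by
        have hle : (T - s) ^ (-a) ≤ (T / 2) ^ (-a) :=
          Real.rpow_le_rpow_of_nonpos (by linarith) (by linarith) (by linarith)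
        have heq : (T / 2) ^ (-a) = 2 ^ a * T ^ (-a) := by
          rw [Real.div_rpow hT0.le (by norm_num), Real.rpow_neg (by norm_num : (0:ℝ) ≤ 2),
            div_eq_mul_inv, inv_inv, mul_comm]
        linarith [heq ▸ hle]
      have h3 : (T - s) ^ (-a) * s ^ b ≤ (2 ^ a * T ^ (-a)) * s ^ b :=
        mul_le_mul_of_nonneg_right h2 hsb
      nlinarith [mul_nonneg hTa hsb, mul_nonneg hTb hTsa, mul_nonneg (mul_nonneg h2b hTa) hsb]
    · have h2 : s ^ b ≤ (2 ^ (-b) + 1) * T ^ b := by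
        rcases le_or_gt 0 b with hb0 | hb0
        · have hle : s ^ b ≤ T ^ b := Real.rpow_le_rpow hs0.le (by linarith) hb0
          nlinarith [mul_nonneg h2b hTb]
        · have hle : s ^ b ≤ (T / 2) ^ b :=
            Real.rpow_le_rpow_of_nonpos (by linarith) h.le hb0.le
          have heq : (T / 2) ^ b = 2 ^ (-b) * T ^ b := by
            rw [Real.div_rpow hT0.le (by norm_num), Real.rpow_neg (by norm_num : (0:ℝ) ≤ 2),
              ]
            ring
          nlinarith [heq ▸ hle]
      have h3 : (T - s) ^ (-a) * s ^ b ≤ (T - s) ^ (-a) * ((2 ^ (-b) + 1) * T ^ b) :=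
        mul_le_mul_of_nonneg_left h2 hTsa
      nlinarith [mul_nonneg hTa hsb, mul_nonneg hTb hTsa, mul_nonneg (mul_nonneg h2a hTb) hTsa]
  -- integrability
  have hne1 : ∀ x ∈ Icc (1:ℝ) (T - τ), T - x ≠ 0 ∨ (0:ℝ) ≤ -a := by
    rintro x ⟨hx1, hx2⟩; left; intro h; nlinarith
  have hne2 : ∀ x ∈ Icc (1:ℝ) (T - τ), x ≠ 0 ∨ (0:ℝ) ≤ b := by
    rintro x ⟨hx1, hx2⟩; left; intro h; linarith
  have hc1 : ContinuousOn (fun s : ℝ => (T - s) ^ (-a)) (Icc 1 (T - τ)) :=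
    ContinuousOn.rpow_const (by fun_prop) hne1
  have hc2 : ContinuousOn (fun s : ℝ => s ^ b) (Icc 1 (T - τ)) :=
    ContinuousOn.rpow_const (by fun_prop) hne2
  have hi1 : IntegrableOn (fun s : ℝ => (T - s) ^ (-a)) (Icc 1 (T - τ)) :=
    hc1.integrableOn_Icc
  have hi2 : IntegrableOn (fun s : ℝ => s ^ b) (Icc 1 (T - τ)) := hc2.integrableOn_Icc
  have hi3 : IntegrableOn (fun s : ℝ => (T - s) ^ (-a) * s ^ b) (Icc 1 (T - τ)) :=
    (hc1.mul hc2).integrableOn_Icc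
  have hi4 : IntegrableOn
      (fun s : ℝ => K * (T ^ (-a) * s ^ b + T ^ b * (T - s) ^ (-a))) (Icc 1 (T - τ)) :=
    ((hi2.const_mul _).add (hi1.const_mul _)).const_mul _
  have hmono := setIntegral_mono_on hi3 hi4 measurableSet_Icc hpt
  rw [integral_const_mul, integral_add (hi2.const_mul _) (hi1.const_mul _),
    integral_const_mul, integral_const_mul] at hmono
  -- compute the s^b integral
  have e2 : ∫ s in Icc (1:ℝ) (T - τ), s ^ b = ((T - τ) ^ (b + 1) - 1) / (b + 1) := by
    rw [MeasureTheory.integral_Icc_eq_integral_Ioc, ← intervalIntegral.integral_of_le h1Tτ,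
      integral_rpow (Or.inl hb)]
    rw [Real.one_rpow]
  have b2 : ((T - τ) ^ (b + 1) - 1) / (b + 1) ≤ T ^ (b + 1) / (b + 1) := by
    have h5 : (T - τ) ^ (b + 1) ≤ T ^ (b + 1) :=
      Real.rpow_le_rpow (by linarith) (by linarith) hb1.le
    gcongr
    linarith
  have e3 : T ^ (-a) * (T ^ (b + 1) / (b + 1)) = T ^ b * (T ^ (1 - a) / (b + 1)) := by
    rw [mul_div_assoc', mul_div_assoc', ← Real.rpow_add hT0, ← Real.rpow_add hT0]
    ring_nf
  have e4 : ∫ s in Icc (1:ℝ) (T - τ), (T - s) ^ (-a) = ∫ u in τ..(T - 1), u ^ (-a) := by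
    rw [MeasureTheory.integral_Icc_eq_integral_Ioc, ← intervalIntegral.integral_of_le h1Tτ,
      intervalIntegral.integral_comp_sub_left (fun u : ℝ => u ^ (-a)) T]
    norm_num
  rw [e2, e4] at hmono
  refine hmono.trans ?_
  have h6 : T ^ (-a) * (((T - τ) ^ (b + 1) - 1) / (b + 1)) ≤ T ^ b * (T ^ (1 - a) / (b + 1)) := by
    rw [← e3]
    exact mul_le_mul_of_nonneg_left b2 hTa
  exact mul_le_mul_of_nonneg_left (by linarith) hK0.le

/-- Let `a ≥ 1` and `b > -1`. There is `C = C(a,b) > 0` such that for all `τ, T` with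
`2 ≤ τ` and `2τ ≤ T`: if `a = 1` then `∫₁^{T-τ} (T-s)⁻¹ s^b ds ≤ C T^b log(T/τ)`, and
if `a > 1` then `∫₁^{T-τ} (T-s)^{-a} s^b ds ≤ C T^b τ^{1-a}`. -/
theorem stmt1 (a b : ℝ) (ha : 1 ≤ a) (hb : -1 < b) :
    ∃ C : ℝ, 0 < C ∧ ∀ τ T : ℝ, 2 ≤ τ → 2 * τ ≤ T →
      (a = 1 →
        ∫ s in Icc (1 : ℝ) (T - τ), (T - s)⁻¹ * s ^ b ≤ C * T ^ b * Real.log (T / τ)) ∧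
      (1 < a →
        ∫ s in Icc (1 : ℝ) (T - τ), (T - s) ^ (-a) * s ^ b ≤ C * T ^ b * τ ^ (1 - a)) := by
  have hb1 : (0:ℝ) < b + 1 := by linarith
  have hlog2 : (0:ℝ) < Real.log 2 := Real.log_pos one_lt_two
  have hq0 : (0:ℝ) < 1 / ((b + 1) * Real.log 2) := one_div_pos.mpr (mul_pos hb1 hlog2)
  have hp0 : (0:ℝ) < 1 / (b + 1) := one_div_pos.mpr hb1
  have hr0 : (0:ℝ) ≤ 1 / (a - 1) := one_div_nonneg.mpr (by linarith)
  have hK0 : (0:ℝ) < 2 ^ a + 2 ^ (-b) + 1 := by positivity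
  refine ⟨(2 ^ a + 2 ^ (-b) + 1) * (1 / ((b + 1) * Real.log 2) + 1 / (b + 1) + 1 / (a - 1) + 1),
    by nlinarith, ?_⟩
  intro τ T hτ hT
  have hτ0 : (0:ℝ) < τ := by linarith
  have hT0 : (0:ℝ) < T := by linarith
  have h1Tτ : (1:ℝ) ≤ T - τ := by linarith
  have hTb : (0:ℝ) ≤ T ^ b := Real.rpow_nonneg hT0.le _
  have key := aux_key a b τ T ha hb hτ hT
  constructor
  · rintro rfl
    set K : ℝ := 2 ^ (1:ℝ) + 2 ^ (-b) + 1 with hKdef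
    set q : ℝ := 1 / ((b + 1) * Real.log 2) with hqdef
    have eI : ∫ s in Icc (1:ℝ) (T - τ), (T - s)⁻¹ * s ^ b
        = ∫ s in Icc (1:ℝ) (T - τ), (T - s) ^ (-(1:ℝ)) * s ^ b := by
      simp [Real.rpow_neg_one]
    have eJ : (∫ u in τ..(T - 1), u ^ (-(1:ℝ))) = Real.log ((T - 1) / τ) := by
      simp only [Real.rpow_neg_one]
      exact integral_inv (Set.notMem_uIcc_of_lt hτ0 (by linarith))
    have e0 : T ^ ((1:ℝ) - 1) = 1 := by norm_num
    rw [eJ, e0] at key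
    rw [eI]
    refine key.trans ?_
    have hL2 : Real.log 2 ≤ Real.log (T / τ) :=
      Real.log_le_log two_pos ((le_div_iff₀ hτ0).mpr (by linarith))
    have hL1 : Real.log ((T - 1) / τ) ≤ Real.log (T / τ) :=
      Real.log_le_log (div_pos (by linarith) hτ0) (by gcongr; linarith)
    have hL0 : (0:ℝ) < Real.log (T / τ) := lt_of_lt_of_le hlog2 hL2
    have h1 : 1 / (b + 1) ≤ q * Real.log (T / τ) := by
      have hq2 : q * Real.log 2 = 1 / (b + 1) := by
        rw [hqdef]; field_simp
      nlinarith
    calc K * (T ^ b * (1 / (b + 1)) + T ^ b * Real.log ((T - 1) / τ))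
        ≤ K * (T ^ b * (q * Real.log (T / τ)) + T ^ b * Real.log (T / τ)) := by
          have := mul_le_mul_of_nonneg_left h1 hTb
          have := mul_le_mul_of_nonneg_left hL1 hTb
          nlinarith
      _ = K * (q + 1) * (T ^ b * Real.log (T / τ)) := by ring
      _ ≤ K * (q + 1 / (b + 1) + 1 / ((1:ℝ) - 1) + 1) * (T ^ b * Real.log (T / τ)) := by
          have hP : (0:ℝ) ≤ T ^ b * Real.log (T / τ) := mul_nonneg hTb hL0.le
          have h0 : (1:ℝ) / ((1:ℝ) - 1) = 0 := by norm_num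
          have h2 : K * (q + 1) ≤ K * (q + 1 / (b + 1) + 1 / ((1:ℝ) - 1) + 1) := by
            rw [h0]; nlinarith
          exact mul_le_mul_of_nonneg_right h2 hP
      _ = K * (q + 1 / (b + 1) + 1 / ((1:ℝ) - 1) + 1) * T ^ b * Real.log (T / τ) := by ring
  · intro ha1
    have ha2 : (0:ℝ) < a - 1 := by linarith
    have hne : -a ≠ -1 := by intro h; linarith
    have eJ : (∫ u in τ..(T - 1), u ^ (-a)) = ((T - 1) ^ (-a + 1) - τ ^ (-a + 1)) / (-a + 1) :=
      integral_rpow (Or.inr ⟨hne, Set.notMem_uIcc_of_lt hτ0 (by linarith)⟩)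
    rw [show -a + 1 = 1 - a from by ring] at eJ
    have hx : (0:ℝ) ≤ (T - 1) ^ (1 - a) := Real.rpow_nonneg (by linarith) _
    have hτa : (0:ℝ) ≤ τ ^ (1 - a) := Real.rpow_nonneg hτ0.le _
    have hJ : ((T - 1) ^ (1 - a) - τ ^ (1 - a)) / (1 - a) ≤ τ ^ (1 - a) / (a - 1) := by
      have heq : ((T - 1) ^ (1 - a) - τ ^ (1 - a)) / (1 - a)
          = (τ ^ (1 - a) - (T - 1) ^ (1 - a)) / (a - 1) := by
        rw [div_eq_div_iff (by linarith : (1:ℝ) - a ≠ 0) (by linarith : a - 1 ≠ 0)]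
        ring
      rw [heq]
      gcongr
      linarith
    have hτT : T ^ (1 - a) ≤ τ ^ (1 - a) :=
      Real.rpow_le_rpow_of_nonpos hτ0 (by linarith) (by linarith)
    rw [eJ] at key
    refine key.trans ?_
    have h6 : T ^ b * (T ^ (1 - a) / (b + 1)) ≤ T ^ b * (τ ^ (1 - a) / (b + 1)) := by
      have : T ^ (1 - a) / (b + 1) ≤ τ ^ (1 - a) / (b + 1) := by gcongr
      exact mul_le_mul_of_nonneg_left this hTb
    have h7 := mul_le_mul_of_nonneg_left hJ hTb
    have hP : (0:ℝ) ≤ T ^ b * τ ^ (1 - a) := mul_nonneg hTb hτa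
    calc (2 ^ a + 2 ^ (-b) + 1)
          * (T ^ b * (T ^ (1 - a) / (b + 1)) + T ^ b * (((T - 1) ^ (1 - a) - τ ^ (1 - a)) / (1 - a)))
        ≤ (2 ^ a + 2 ^ (-b) + 1)
          * (T ^ b * (τ ^ (1 - a) / (b + 1)) + T ^ b * (τ ^ (1 - a) / (a - 1))) :=
          mul_le_mul_of_nonneg_left (add_le_add h6 h7) hK0.le
      _ = (2 ^ a + 2 ^ (-b) + 1) * (1 / (b + 1) + 1 / (a - 1)) * (T ^ b * τ ^ (1 - a)) := by
          ring
      _ ≤ (2 ^ a + 2 ^ (-b) + 1) * (1 / ((b + 1) * Real.log 2) + 1 / (b + 1) + 1 / (a - 1) + 1)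
          * (T ^ b * τ ^ (1 - a)) := by
          have h8 : (2 ^ a + 2 ^ (-b) + 1) * (1 / (b + 1) + 1 / (a - 1))
              ≤ (2 ^ a + 2 ^ (-b) + 1)
                * (1 / ((b + 1) * Real.log 2) + 1 / (b + 1) + 1 / (a - 1) + 1) := by
            nlinarith
          exact mul_le_mul_of_nonneg_right h8 hP
      _ = (2 ^ a + 2 ^ (-b) + 1) * (1 / ((b + 1) * Real.log 2) + 1 / (b + 1) + 1 / (a - 1) + 1)
          * T ^ b * τ ^ (1 - a) := by ring
end

section
/- Let a ≥ 1 and C₀ > 0. Assume the sharp Trudinger–Moser inequality in the form: for every continuously differentiable u : ℝ² → ℂ with ∫_{ℝ²}(|∇u|² + |u|²) dx ≤ 1, one has ∫_{ℝ²}(e^{4π|u|²} − 1) dx ≤ C₀ (the integrand is nonnegative, so the integral is taken in [0,∞]). Then for every continuously differentiable φ : ℝ² → ℂ with 0 < ∫_{ℝ²}|φ|² dx < ∞ and ∫_{ℝ²}|∇φ|² dx < 4π/a, one has ∫_{ℝ²}(e^{|φ|²} − 1)^a dx ≤ C₀ · (∫_{ℝ²}|φ|² dx) / (4π/a − ∫_{ℝ²}|∇φ|²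 dx). -/
open MeasureTheory
open scoped ENNReal

private lemma stmt7_cov (f : EuclideanSpace ℝ (Fin 2) → ℝ≥0∞) (hf : Measurable f) {r : ℝ}
    (hr : r ≠ 0) :
    ∫⁻ x, f (r • x) = ENNReal.ofReal |(r ^ 2)⁻¹| * ∫⁻ x, f x := by
  rw [← lintegral_map hf (measurable_const_smul r), Measure.map_addHaar_smul volume hr,
    lintegral_smul_measure]
  congr 3
  simp [finrank_euclideanSpace]

private lemma stmt7_pw (x : ℝ) (a : ℝ) (hx : 0 ≤ x) (ha : 1 ≤ a) :
    (Real.exp x - 1) ^ a ≤ Real.exp (a * x) - 1 := by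
  have h1 : (1:ℝ) ≤ Real.exp x := Real.one_le_exp hx
  have key := NNReal.add_rpow_le_rpow_add ((Real.exp x - 1).toNNReal) 1 ha
  have h := (NNReal.coe_le_coe).2 key
  push_cast [NNReal.coe_rpow] at h
  rw [Real.coe_toNNReal _ (by linarith), Real.one_rpow, sub_add_cancel] at h
  rw [mul_comm a x, Real.exp_mul]
  linarith

/-- Assuming the sharp Trudinger–Moser inequality (for every `C¹` function `u : ℝ² → ℂ` with
`∫(|∇u|² + |u|²) ≤ 1` one has `∫(e^{4π|u|²} − 1) ≤ C₀`), every `C¹` function `φ : ℝ² → ℂ` with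
`0 < ∫|φ|² < ∞` and `∫|∇φ|² < 4π/a` satisfies
`∫(e^{|φ|²} − 1)^a ≤ C₀ ∫|φ|² / (4π/a − ∫|∇φ|²)`. -/
theorem stmt7 (a C₀ : ℝ) (ha : 1 ≤ a) (hC₀ : 0 < C₀)
    (hTM : ∀ u : EuclideanSpace ℝ (Fin 2) → ℂ, ContDiff ℝ 1 u →
      (∫⁻ x, ENNReal.ofReal (‖fderiv ℝ u x‖ ^ 2 + ‖u x‖ ^ 2)) ≤ 1 →
      (∫⁻ x, ENNReal.ofReal (Real.exp (4 * Real.pi * ‖u x‖ ^ 2) - 1)) ≤ ENNReal.ofReal C₀)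
    (φ : EuclideanSpace ℝ (Fin 2) → ℂ) (hφ : ContDiff ℝ 1 φ)
    (hmass_pos : 0 < ∫⁻ x, ENNReal.ofReal (‖φ x‖ ^ 2))
    (hmass_fin : (∫⁻ x, ENNReal.ofReal (‖φ x‖ ^ 2)) < ⊤)
    (hgrad : (∫⁻ x, ENNReal.ofReal (‖fderiv ℝ φ x‖ ^ 2)) < ENNReal.ofReal (4 * Real.pi / a)) :
    (∫⁻ x, ENNReal.ofReal ((Real.exp (‖φ x‖ ^ 2) - 1) ^ a)) ≤
      ENNReal.ofReal C₀ * (∫⁻ x, ENNReal.ofReal (‖φ x‖ ^ 2)) /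
        (ENNReal.ofReal (4 * Real.pi / a) - ∫⁻ x, ENNReal.ofReal (‖fderiv ℝ φ x‖ ^ 2)) := by
  have hπ := Real.pi_pos
  have ha0 : (0:ℝ) < a := lt_of_lt_of_le one_pos ha
  set c : ℝ := 4 * Real.pi / a with hc_def
  have hc : 0 < c := by positivity
  set M : ℝ≥0∞ := ∫⁻ x, ENNReal.ofReal (‖φ x‖ ^ 2) with hM_def
  set G : ℝ≥0∞ := ∫⁻ x, ENNReal.ofReal (‖fderiv ℝ φ x‖ ^ 2) with hG_def
  have hGfin : G ≠ ⊤ := hgrad.ne_top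
  set m : ℝ := M.toReal with hm_def
  set g : ℝ := G.toReal with hg_def
  have hm : 0 < m := ENNReal.toReal_pos hmass_pos.ne' hmass_fin.ne
  have hg0 : 0 ≤ g := ENNReal.toReal_nonneg
  have hglt : g < c := ENNReal.toReal_lt_of_lt_ofReal hgrad
  set d : ℝ := c - g with hd_def
  have hd : 0 < d := sub_pos.2 hglt
  set L : ℝ := Real.sqrt (m / d) with hL_def
  have hL : 0 < L := Real.sqrt_pos.2 (by positivity)
  have hL2 : L ^ 2 = m / d := Real.sq_sqrt (by positivity)
  set s : ℝ := Real.sqrt (a / (4 * Real.pi)) with hs_def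
  have hs : 0 < s := Real.sqrt_pos.2 (by positivity)
  have hs2 : s ^ 2 = a / (4 * Real.pi) := Real.sq_sqrt (by positivity)
  -- measurability / continuity facts
  have hφd : Differentiable ℝ φ := hφ.differentiable one_ne_zero
  have hDcont : Continuous (fun x => fderiv ℝ φ x) := hφ.continuous_fderiv one_ne_zero
  -- the rescaled function
  set u : EuclideanSpace ℝ (Fin 2) → ℂ := fun x => s • φ (L • x) with hu_def
  have hu_cd : ContDiff ℝ 1 u := (hφ.comp (contDiff_id.const_smul L)).const_smul s
  -- derivative of u
  have hu_deriv : ∀ x, HasFDerivAt u ((s * L) • fderiv ℝ φ (L • x)) x := by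
    intro x
    have hT : HasFDerivAt (fun y : EuclideanSpace ℝ (Fin 2) => L • y)
        (L • ContinuousLinearMap.id ℝ (EuclideanSpace ℝ (Fin 2))) x :=
      (L • ContinuousLinearMap.id ℝ (EuclideanSpace ℝ (Fin 2))).hasFDerivAt
    have hcomp := ((hφd (L • x)).hasFDerivAt).comp x hT
    have := hcomp.const_smul s
    refine this.congr_fderiv ?_
    ext v
    simp [smul_smul, mul_comm]
  have hnorm_du : ∀ x, ‖fderiv ℝ u x‖ = s * L * ‖fderiv ℝ φ (L • x)‖ := by
    intro x
    rw [(hu_deriv x).fderiv,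
      show ‖(s * L) • fderiv ℝ φ (L • x)‖ = ‖s * L‖ * ‖fderiv ℝ φ (L • x)‖ from
        norm_smul (s * L) (fderiv ℝ φ (L • x)),
      Real.norm_eq_abs, abs_of_pos (mul_pos hs hL)]
  have hnorm_u : ∀ x, ‖u x‖ = s * ‖φ (L • x)‖ := by
    intro x
    rw [hu_def, norm_smul, Real.norm_eq_abs, abs_of_pos hs]
  -- energy of u equals 1
  have hmeas1 : Measurable fun y : EuclideanSpace ℝ (Fin 2) =>
      ENNReal.ofReal (s ^ 2 * L ^ 2 * ‖fderiv ℝ φ y‖ ^ 2 + s ^ 2 * ‖φ y‖ ^ 2) :=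
    (ENNReal.continuous_ofReal.comp
      (((continuous_const.mul ((hDcont.norm).pow 2)).add
        (continuous_const.mul ((hφ.continuous.norm).pow 2))))).measurable
  have hmeasG : Measurable fun y : EuclideanSpace ℝ (Fin 2) =>
      ENNReal.ofReal (‖fderiv ℝ φ y‖ ^ 2) :=
    (ENNReal.continuous_ofReal.comp ((hDcont.norm).pow 2)).measurable
  have hmeasM : Measurable fun y : EuclideanSpace ℝ (Fin 2) =>
      ENNReal.ofReal (‖φ y‖ ^ 2) :=
    (ENNReal.continuous_ofReal.comp ((hφ.continuous.norm).pow 2)).measurable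
  have hMeq : M = ENNReal.ofReal m := (ENNReal.ofReal_toReal hmass_fin.ne).symm
  have hGeq : G = ENNReal.ofReal g := (ENNReal.ofReal_toReal hGfin).symm
  have henergy : (∫⁻ x, ENNReal.ofReal (‖fderiv ℝ u x‖ ^ 2 + ‖u x‖ ^ 2)) ≤ 1 := by
    have hptwise : ∀ x, ENNReal.ofReal (‖fderiv ℝ u x‖ ^ 2 + ‖u x‖ ^ 2)
        = ENNReal.ofReal (s ^ 2 * L ^ 2 * ‖fderiv ℝ φ (L • x)‖ ^ 2
            + s ^ 2 * ‖φ (L • x)‖ ^ 2) := by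
      intro x
      rw [hnorm_du x, hnorm_u x]
      ring_nf
    calc (∫⁻ x, ENNReal.ofReal (‖fderiv ℝ u x‖ ^ 2 + ‖u x‖ ^ 2))
        = ∫⁻ x, ENNReal.ofReal (s ^ 2 * L ^ 2 * ‖fderiv ℝ φ (L • x)‖ ^ 2
            + s ^ 2 * ‖φ (L • x)‖ ^ 2) := by
          exact lintegral_congr fun x => hptwise x
      _ = ENNReal.ofReal |(L ^ 2)⁻¹| *
            ∫⁻ y, ENNReal.ofReal (s ^ 2 * L ^ 2 * ‖fderiv ℝ φ y‖ ^ 2 + s ^ 2 * ‖φ y‖ ^ 2) :=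
          stmt7_cov _ hmeas1 hL.ne'
      _ = ENNReal.ofReal ((L ^ 2)⁻¹) *
            (ENNReal.ofReal (s ^ 2 * L ^ 2) * G + ENNReal.ofReal (s ^ 2) * M) := by
          rw [abs_of_pos (by positivity)]
          congr 1
          rw [hG_def, hM_def, ← lintegral_const_mul _ hmeasG, ← lintegral_const_mul _ hmeasM,
            ← lintegral_add_left ((hmeasG.const_mul _))]
          refine lintegral_congr fun y => ?_
          rw [← ENNReal.ofReal_mul (show (0:ℝ) ≤ s ^ 2 * L ^ 2 by positivity),
            ← ENNReal.ofReal_mul (show (0:ℝ) ≤ s ^ 2 by positivity),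
            ← ENNReal.ofReal_add (by positivity) (by positivity)]
      _ = ENNReal.ofReal ((L ^ 2)⁻¹ * (s ^ 2 * L ^ 2 * g + s ^ 2 * m)) := by
          rw [hGeq, hMeq, ← ENNReal.ofReal_mul (by positivity),
            ← ENNReal.ofReal_mul (by positivity),
            ← ENNReal.ofReal_add (by positivity) (by positivity),
            ← ENNReal.ofReal_mul (by positivity)]
      _ ≤ 1 := by
          have hval : (L ^ 2)⁻¹ * (s ^ 2 * L ^ 2 * g + s ^ 2 * m) = 1 := by
            rw [hL2, hs2]
            field_simp
            ring_nf
            rw [hd_def, hc_def]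
            have hac : a * (4 * Real.pi / a) = 4 * Real.pi := by field_simp
            linear_combination hac
          rw [hval, ENNReal.ofReal_one]
  -- apply the Trudinger–Moser hypothesis
  have hTMu := hTM u hu_cd henergy
  -- rewrite the TM integrand
  have hexp_meas : Measurable fun y : EuclideanSpace ℝ (Fin 2) =>
      ENNReal.ofReal (Real.exp (a * ‖φ y‖ ^ 2) - 1) :=
    (ENNReal.continuous_ofReal.comp
      (((Real.continuous_exp.comp (continuous_const.mul ((hφ.continuous.norm).pow 2))).sub
        continuous_const))).measurable
  have hTM2 : ENNReal.ofReal ((L ^ 2)⁻¹) *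
      (∫⁻ y, ENNReal.ofReal (Real.exp (a * ‖φ y‖ ^ 2) - 1)) ≤ ENNReal.ofReal C₀ := by
    have heq : (∫⁻ x, ENNReal.ofReal (Real.exp (4 * Real.pi * ‖u x‖ ^ 2) - 1))
        = ENNReal.ofReal ((L ^ 2)⁻¹) *
            ∫⁻ y, ENNReal.ofReal (Real.exp (a * ‖φ y‖ ^ 2) - 1) := by
      rw [← abs_of_pos (show (0:ℝ) < (L ^ 2)⁻¹ by positivity)]
      rw [← stmt7_cov _ hexp_meas hL.ne']
      refine lintegral_congr fun x => ?_
      congr 2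
      rw [hnorm_u x, mul_pow, ← mul_assoc]
      congr 1
      rw [hs2]
      field_simp
    rw [← heq]
    exact hTMu
  have hmain : (∫⁻ y, ENNReal.ofReal (Real.exp (a * ‖φ y‖ ^ 2) - 1))
      ≤ ENNReal.ofReal C₀ * ENNReal.ofReal (L ^ 2) := by
    have hcancel : ENNReal.ofReal (L ^ 2) * ENNReal.ofReal ((L ^ 2)⁻¹) = 1 := by
      rw [← ENNReal.ofReal_mul (by positivity), mul_inv_cancel₀ (by positivity),
        ENNReal.ofReal_one]
    calc (∫⁻ y, ENNReal.ofReal (Real.exp (a * ‖φ y‖ ^ 2) - 1))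
        = ENNReal.ofReal (L ^ 2) * (ENNReal.ofReal ((L ^ 2)⁻¹) *
            ∫⁻ y, ENNReal.ofReal (Real.exp (a * ‖φ y‖ ^ 2) - 1)) := by
          rw [← mul_assoc, hcancel, one_mul]
      _ ≤ ENNReal.ofReal (L ^ 2) * ENNReal.ofReal C₀ :=
          mul_le_mul_right hTM2 _
      _ = ENNReal.ofReal C₀ * ENNReal.ofReal (L ^ 2) := mul_comm _ _
  -- pointwise bound and conclusion
  have hpt : (∫⁻ x, ENNReal.ofReal ((Real.exp (‖φ x‖ ^ 2) - 1) ^ a))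
      ≤ ∫⁻ y, ENNReal.ofReal (Real.exp (a * ‖φ y‖ ^ 2) - 1) :=
    lintegral_mono fun x => ENNReal.ofReal_le_ofReal (stmt7_pw _ a (by positivity) ha)
  have hrhs : ENNReal.ofReal C₀ * ENNReal.ofReal (L ^ 2)
      = ENNReal.ofReal C₀ * M / (ENNReal.ofReal c - G) := by
    rw [hGeq, ← ENNReal.ofReal_sub _ hg0, hMeq, hL2, ENNReal.ofReal_div_of_pos hd,
      mul_div_assoc]
  calc (∫⁻ x, ENNReal.ofReal ((Real.exp (‖φ x‖ ^ 2) - 1) ^ a))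
      ≤ ∫⁻ y, ENNReal.ofReal (Real.exp (a * ‖φ y‖ ^ 2) - 1) := hpt
    _ ≤ ENNReal.ofReal C₀ * ENNReal.ofReal (L ^ 2) := hmain
    _ = ENNReal.ofReal C₀ * M / (ENNReal.ofReal c - G) := hrhs
end

section
/- Let d ≥ 1 be an integer, let u : ℝ^d → ℂ be smooth and compactly supported, and let h : ℝ^d → ℝ^d be a continuously differentiable vector field. Then Re ∫_{ℝ^d} Δu (h·∇ū) dx = −Σ_{k,j=1}^d Re ∫_{ℝ^d} ∂_k u · (∂_k h_j) · ∂_j ū dx + (1/2) ∫_{ℝ^d} (div h) |∇u|² dx. -/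
open MeasureTheory
open scoped BigOperators

section Aux

lemma key_ibp_zero {d : ℕ} {G : Type*} [NormedAddCommGroup G] [NormedSpace ℝ G]
    {g : EuclideanSpace ℝ (Fin d) → G} (hg : ContDiff ℝ 1 g)
    (h2g : HasCompactSupport g) (v : EuclideanSpace ℝ (Fin d)) :
    ∫ x, fderiv ℝ g x v = 0 := by
  have hg' : Differentiable ℝ g := hg.differentiable one_ne_zero
  have hcont : Continuous fun x => fderiv ℝ g x v :=
    ((hg.continuous_fderiv one_ne_zero).clm_apply continuous_const)
  have hs : HasCompactSupport fun x => fderiv ℝ g x v := h2g.fderiv_apply ℝ v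
  have hint : Integrable (fun x => fderiv ℝ g x v) :=
    hcont.integrable_of_hasCompactSupport hs
  have h1 : Integrable (fun x => fderiv ℝ (fun _ : EuclideanSpace ℝ (Fin d) => (1:ℝ)) x v • g x) := by
    simp [fderiv_const]
  have h2 : Integrable (fun x => (1:ℝ) • fderiv ℝ g x v) := by simpa using hint
  have h3 : Integrable (fun x => (1:ℝ) • g x) := by
    simpa using hg.continuous.integrable_of_hasCompactSupport h2g
  have := integral_smul_fderiv_eq_neg_fderiv_smul_of_integrable (μ := volume)
      h1 h2 h3 (fun x _ => differentiableAt_const _) (fun x _ => hg' x)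
  simpa [fderiv_const] using this

variable {d : ℕ} {u : EuclideanSpace ℝ (Fin d) → ℂ}

lemma symm_second (hu : ContDiff ℝ (⊤ : ℕ∞) u)
    (v w x : EuclideanSpace ℝ (Fin d)) :
    fderiv ℝ (fun y => fderiv ℝ u y w) x v = fderiv ℝ (fun y => fderiv ℝ u y v) x w := by
  have hu3 : ContDiff ℝ 3 u := hu.of_le (WithTop.coe_le_coe.mpr (le_top : (3:ℕ∞) ≤ ⊤))
  have hd : DifferentiableAt ℝ (fderiv ℝ u) x :=
    (hu3.fderiv_right (m := 2) le_rfl).differentiable (by norm_num) x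
  have key : ∀ p : EuclideanSpace ℝ (Fin d),
      fderiv ℝ (fun y => fderiv ℝ u y p) x
        = (ContinuousLinearMap.apply ℝ ℂ p).comp (fderiv ℝ (fderiv ℝ u) x) := fun p =>
    (((ContinuousLinearMap.apply ℝ ℂ p).hasFDerivAt).comp x hd.hasFDerivAt).fderiv
  rw [key v, key w]
  simp only [ContinuousLinearMap.comp_apply, ContinuousLinearMap.apply_apply]
  exact (hu.contDiffAt.isSymmSndFDerivAt (by
    rw [minSmoothness_of_isRCLikeNormedField]; exact WithTop.coe_le_coe.mpr (le_top : (2:ℕ∞) ≤ ⊤))) v w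

lemma ibp1 (hu : ContDiff ℝ (⊤ : ℕ∞) u) (hsupp : HasCompactSupport u)
    (H : EuclideanSpace ℝ (Fin d) → ℝ) (hH : ContDiff ℝ 1 H)
    (v w : EuclideanSpace ℝ (Fin d)) :
    (∫ x, fderiv ℝ (fun y => fderiv ℝ u y v) x v *
        (((H x : ℝ) : ℂ) * (starRingEnd ℂ) (fderiv ℝ u x w)))
    = -(∫ x, fderiv ℝ u x v * ((fderiv ℝ H x v : ℝ) : ℂ) *
          (starRingEnd ℂ) (fderiv ℝ u x w))
      - ∫ x, fderiv ℝ u x v * (((H x : ℝ) : ℂ) *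
          (starRingEnd ℂ) (fderiv ℝ (fun y => fderiv ℝ u y w) x v)) := by
  have hu3 : ContDiff ℝ 3 u := hu.of_le (WithTop.coe_le_coe.mpr (le_top : (3:ℕ∞) ≤ ⊤))
  have hUc : ContDiff ℝ 2 (fun x => fderiv ℝ u x v) :=
    (hu3.fderiv_right (m := 2) le_rfl).clm_apply contDiff_const
  have hWc : ContDiff ℝ 2 (fun x => fderiv ℝ u x w) :=
    (hu3.fderiv_right (m := 2) le_rfl).clm_apply contDiff_const
  have hUs : HasCompactSupport fun x => fderiv ℝ u x v := hsupp.fderiv_apply ℝ v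
  have hWs : HasCompactSupport fun x => fderiv ℝ u x w := hsupp.fderiv_apply ℝ w
  have hUd : Differentiable ℝ (fun x => fderiv ℝ u x v) := hUc.differentiable (by norm_num)
  have hWd : Differentiable ℝ (fun x => fderiv ℝ u x w) := hWc.differentiable (by norm_num)
  -- continuity of second derivatives
  have hDUc : Continuous fun x => fderiv ℝ (fun y => fderiv ℝ u y v) x v :=
    ((hUc.fderiv_right (m := 1) le_rfl).clm_apply contDiff_const).continuous
  have hDWc : Continuous fun x => fderiv ℝ (fun y => fderiv ℝ u y w) x v :=
    ((hWc.fderiv_right (m := 1) le_rfl).clm_apply contDiff_const).continuous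
  have hCW : Continuous fun x => (starRingEnd ℂ) (fderiv ℝ u x w) :=
    Complex.continuous_conj.comp hWc.continuous
  have hCWs : HasCompactSupport fun x => (starRingEnd ℂ) (fderiv ℝ u x w) :=
    hWs.comp_left (by simp)
  have hHC : Continuous fun x => ((H x : ℝ) : ℂ) :=
    Complex.continuous_ofReal.comp hH.continuous
  have hdHC : Continuous fun x => ((fderiv ℝ H x v : ℝ) : ℂ) :=
    Complex.continuous_ofReal.comp ((hH.continuous_fderiv one_ne_zero).clm_apply continuous_const)
  -- the three integrands
  set A1 : EuclideanSpace ℝ (Fin d) → ℂ := fun x =>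
    fderiv ℝ (fun y => fderiv ℝ u y v) x v *
      (((H x : ℝ) : ℂ) * (starRingEnd ℂ) (fderiv ℝ u x w)) with hA1
  set A2 : EuclideanSpace ℝ (Fin d) → ℂ := fun x =>
    fderiv ℝ u x v * ((fderiv ℝ H x v : ℝ) : ℂ) *
      (starRingEnd ℂ) (fderiv ℝ u x w) with hA2
  set A3 : EuclideanSpace ℝ (Fin d) → ℂ := fun x =>
    fderiv ℝ u x v * (((H x : ℝ) : ℂ) *
      (starRingEnd ℂ) (fderiv ℝ (fun y => fderiv ℝ u y w) x v)) with hA3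
  have iA1 : Integrable A1 := by
    apply Continuous.integrable_of_hasCompactSupport
    · exact hDUc.mul (hHC.mul hCW)
    · exact (hCWs.mul_left).mul_left
  have iA2 : Integrable A2 := by
    apply Continuous.integrable_of_hasCompactSupport
    · exact (hUc.continuous.mul hdHC).mul hCW
    · exact hCWs.mul_left
  have iA3 : Integrable A3 := by
    apply Continuous.integrable_of_hasCompactSupport
    · exact hUc.continuous.mul (hHC.mul (Complex.continuous_conj.comp hDWc))
    · exact (hUs.mul_right)
  -- the product function whose derivative we integrate
  have hgc : ContDiff ℝ 1 (fun x => fderiv ℝ u x v *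
      (((H x : ℝ) : ℂ) * (starRingEnd ℂ) (fderiv ℝ u x w))) := by
    apply (hUc.of_le (by norm_num)).mul
    apply (Complex.ofRealCLM.contDiff.comp hH).mul
    exact (Complex.conjCLE.toContinuousLinearMap.contDiff).comp (hWc.of_le (by norm_num))
  have hgs : HasCompactSupport (fun x => fderiv ℝ u x v *
      (((H x : ℝ) : ℂ) * (starRingEnd ℂ) (fderiv ℝ u x w))) := hUs.mul_right
  have hzero := key_ibp_zero hgc hgs v
  have hptw : ∀ x, fderiv ℝ (fun x => fderiv ℝ u x v *
      (((H x : ℝ) : ℂ) * (starRingEnd ℂ) (fderiv ℝ u x w))) x v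
      = A1 x + (A2 x + A3 x) := by
    intro x
    have h1 : HasFDerivAt (fun y => fderiv ℝ u y v)
        (fderiv ℝ (fun y => fderiv ℝ u y v) x) x := (hUd x).hasFDerivAt
    have h2 : HasFDerivAt (fun y => ((H y : ℝ) : ℂ))
        (Complex.ofRealCLM.comp (fderiv ℝ H x)) x :=
      Complex.ofRealCLM.hasFDerivAt.comp x (hH.differentiable one_ne_zero x).hasFDerivAt
    have h3 : HasFDerivAt (fun y => (starRingEnd ℂ) (fderiv ℝ u y w))
        (Complex.conjCLE.toContinuousLinearMap.comp
          (fderiv ℝ (fun y => fderiv ℝ u y w) x)) x :=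
      Complex.conjCLE.toContinuousLinearMap.hasFDerivAt.comp x (hWd x).hasFDerivAt
    have h4 := h2.mul h3
    have h5 : HasFDerivAt (fun y => fderiv ℝ u y v *
        (((H y : ℝ) : ℂ) * (starRingEnd ℂ) (fderiv ℝ u y w))) _ x := h1.mul h4
    rw [h5.fderiv]
    simp only [ContinuousLinearMap.add_apply, ContinuousLinearMap.smul_apply,
      ContinuousLinearMap.comp_apply, Complex.ofRealCLM_apply, smul_eq_mul,
      ContinuousLinearEquiv.coe_coe, Complex.conjCLE_apply, hA1, hA2, hA3, Pi.mul_apply]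
    ring
  rw [integral_congr_ae (Filter.Eventually.of_forall hptw)] at hzero
  have i23 : Integrable (fun x => A2 x + A3 x) := iA2.add iA3
  rw [integral_add iA1 i23, integral_add iA2 iA3] at hzero
  linear_combination hzero

lemma complex_normsq (z : ℂ) : ‖z‖ ^ 2 = z.re * z.re + z.im * z.im := by
  rw [Complex.sq_norm, Complex.normSq_apply]

lemma ibp2 (hu : ContDiff ℝ (⊤ : ℕ∞) u) (hsupp : HasCompactSupport u)
    (H : EuclideanSpace ℝ (Fin d) → ℝ) (hH : ContDiff ℝ 1 H)
    (v w : EuclideanSpace ℝ (Fin d)) :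
    (∫ x, fderiv ℝ u x v * (((H x : ℝ) : ℂ) *
        (starRingEnd ℂ) (fderiv ℝ (fun y => fderiv ℝ u y v) x w))).re
    = -(1 / 2) * ∫ x, fderiv ℝ H x w * ‖fderiv ℝ u x v‖ ^ 2 := by
  have hu3 : ContDiff ℝ 3 u := hu.of_le (WithTop.coe_le_coe.mpr (le_top : (3:ℕ∞) ≤ ⊤))
  have hUc : ContDiff ℝ 2 (fun x => fderiv ℝ u x v) :=
    (hu3.fderiv_right (m := 2) le_rfl).clm_apply contDiff_const
  have hUs : HasCompactSupport fun x => fderiv ℝ u x v := hsupp.fderiv_apply ℝ v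
  have hUd : Differentiable ℝ (fun x => fderiv ℝ u x v) := hUc.differentiable (by norm_num)
  have hDUc : Continuous fun x => fderiv ℝ (fun y => fderiv ℝ u y v) x w :=
    ((hUc.fderiv_right (m := 1) le_rfl).clm_apply contDiff_const).continuous
  -- derivative of the squared norm
  have hNfun : (fun y => ‖fderiv ℝ u y v‖ ^ 2)
      = fun y => (fderiv ℝ u y v).re * (fderiv ℝ u y v).re
        + (fderiv ℝ u y v).im * (fderiv ℝ u y v).im := funext fun y => complex_normsq _
  have hDN : ∀ x, fderiv ℝ (fun y => ‖fderiv ℝ u y v‖ ^ 2) x w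
      = 2 * ((fderiv ℝ u x v).re * (fderiv ℝ (fun y => fderiv ℝ u y v) x w).re
        + (fderiv ℝ u x v).im * (fderiv ℝ (fun y => fderiv ℝ u y v) x w).im) := by
    intro x
    have hre : HasFDerivAt (fun y => (fderiv ℝ u y v).re)
        (Complex.reCLM.comp (fderiv ℝ (fun y => fderiv ℝ u y v) x)) x :=
      Complex.reCLM.hasFDerivAt.comp x (hUd x).hasFDerivAt
    have him : HasFDerivAt (fun y => (fderiv ℝ u y v).im)
        (Complex.imCLM.comp (fderiv ℝ (fun y => fderiv ℝ u y v) x)) x :=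
      Complex.imCLM.hasFDerivAt.comp x (hUd x).hasFDerivAt
    have h5 : HasFDerivAt (fun y => (fderiv ℝ u y v).re * (fderiv ℝ u y v).re
        + (fderiv ℝ u y v).im * (fderiv ℝ u y v).im) _ x := (hre.mul hre).add (him.mul him)
    rw [hNfun, h5.fderiv]
    simp only [ContinuousLinearMap.add_apply, ContinuousLinearMap.smul_apply,
      ContinuousLinearMap.comp_apply, Complex.reCLM_apply, Complex.imCLM_apply, smul_eq_mul]
    ring
  -- contdiff of squared norm
  have hNc : ContDiff ℝ 1 (fun y => ‖fderiv ℝ u y v‖ ^ 2) := by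
    rw [hNfun]
    have hre : ContDiff ℝ 1 fun y => (fderiv ℝ u y v).re :=
      Complex.reCLM.contDiff.comp (hUc.of_le (by norm_num))
    have him : ContDiff ℝ 1 fun y => (fderiv ℝ u y v).im :=
      Complex.imCLM.contDiff.comp (hUc.of_le (by norm_num))
    exact (hre.mul hre).add (him.mul him)
  have hNs : HasCompactSupport (fun y => ‖fderiv ℝ u y v‖ ^ 2) :=
    hUs.comp_left (g := fun z : ℂ => ‖z‖ ^ 2) (by simp)
  -- IBP for H * N in direction w
  have hgc : ContDiff ℝ 1 (fun x => H x * ‖fderiv ℝ u x v‖ ^ 2) := hH.mul hNc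
  have hgs : HasCompactSupport (fun x => H x * ‖fderiv ℝ u x v‖ ^ 2) := hNs.mul_left
  have hzero := key_ibp_zero hgc hgs w
  have hptw : ∀ x, fderiv ℝ (fun x => H x * ‖fderiv ℝ u x v‖ ^ 2) x w
      = fderiv ℝ H x w * ‖fderiv ℝ u x v‖ ^ 2
        + H x * fderiv ℝ (fun y => ‖fderiv ℝ u y v‖ ^ 2) x w := by
    intro x
    have h1 : HasFDerivAt H (fderiv ℝ H x) x := (hH.differentiable one_ne_zero x).hasFDerivAt
    have h2 : HasFDerivAt (fun y => ‖fderiv ℝ u y v‖ ^ 2)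
        (fderiv ℝ (fun y => ‖fderiv ℝ u y v‖ ^ 2) x) x :=
      ((hNc.differentiable one_ne_zero) x).hasFDerivAt
    have h3 : HasFDerivAt (fun y => H y * ‖fderiv ℝ u y v‖ ^ 2) _ x := h1.mul h2
    rw [h3.fderiv]
    simp only [ContinuousLinearMap.add_apply, ContinuousLinearMap.smul_apply, smul_eq_mul]
    ring
  -- integrability
  have iB1 : Integrable (fun x => fderiv ℝ H x w * ‖fderiv ℝ u x v‖ ^ 2) := by
    apply Continuous.integrable_of_hasCompactSupport
    · exact ((hH.continuous_fderiv one_ne_zero).clm_apply continuous_const).mul hNc.continuous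
    · exact hNs.mul_left
  have iB2 : Integrable (fun x => H x * fderiv ℝ (fun y => ‖fderiv ℝ u y v‖ ^ 2) x w) := by
    apply Continuous.integrable_of_hasCompactSupport
    · exact hH.continuous.mul ((hNc.continuous_fderiv one_ne_zero).clm_apply continuous_const)
    · exact (hNs.fderiv_apply ℝ w).mul_left
  rw [integral_congr_ae (Filter.Eventually.of_forall hptw), integral_add iB1 iB2] at hzero
  -- the complex integrand has real part (1/2) * (H x * DN x)
  have iC : Integrable (fun x => fderiv ℝ u x v * (((H x : ℝ) : ℂ) *
      (starRingEnd ℂ) (fderiv ℝ (fun y => fderiv ℝ u y v) x w))) := by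
    apply Continuous.integrable_of_hasCompactSupport
    · exact hUc.continuous.mul ((Complex.continuous_ofReal.comp hH.continuous).mul
        (Complex.continuous_conj.comp hDUc))
    · exact hUs.mul_right
  have hre_int := integral_re iC
  simp only [RCLike.re_to_complex] at hre_int
  rw [← hre_int]
  have hptre : ∀ x, (fderiv ℝ u x v * (((H x : ℝ) : ℂ) *
      (starRingEnd ℂ) (fderiv ℝ (fun y => fderiv ℝ u y v) x w))).re
      = (1 / 2) * (H x * fderiv ℝ (fun y => ‖fderiv ℝ u y v‖ ^ 2) x w) := by
    intro x
    rw [hDN]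
    simp only [Complex.mul_re, Complex.mul_im, Complex.ofReal_re, Complex.ofReal_im,
      Complex.conj_re, Complex.conj_im]
    ring
  rw [integral_congr_ae (Filter.Eventually.of_forall hptre), integral_const_mul]
  have : ∫ x, H x * fderiv ℝ (fun y => ‖fderiv ℝ u y v‖ ^ 2) x w
      = -∫ x, fderiv ℝ H x w * ‖fderiv ℝ u x v‖ ^ 2 := by linarith
  rw [this]
  ring

lemma perkj (hu : ContDiff ℝ (⊤ : ℕ∞) u) (hsupp : HasCompactSupport u)
    (H : EuclideanSpace ℝ (Fin d) → ℝ) (hH : ContDiff ℝ 1 H)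
    (v w : EuclideanSpace ℝ (Fin d)) :
    (∫ x, fderiv ℝ (fun y => fderiv ℝ u y v) x v *
        (((H x : ℝ) : ℂ) * (starRingEnd ℂ) (fderiv ℝ u x w))).re
    = -(∫ x, fderiv ℝ u x v * ((fderiv ℝ H x v : ℝ) : ℂ) *
          (starRingEnd ℂ) (fderiv ℝ u x w)).re
      + (1 / 2) * ∫ x, fderiv ℝ H x w * ‖fderiv ℝ u x v‖ ^ 2 := by
  rw [ibp1 hu hsupp H hH v w]
  simp only [symm_second hu v w]
  rw [Complex.sub_re, Complex.neg_re, ibp2 hu hsupp H hH v w]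
  ring

end Aux

/-- Integration by parts (gradient-term component of the Morawetz identity):
`Re ∫ Δu (h·∇ū) = −Σ_{k,j} Re ∫ ∂_k u (∂_k h_j) ∂_j ū + (1/2) ∫ (div h) |∇u|²`. -/
theorem stmt11 (d : ℕ) (hd : 1 ≤ d)
    (u : EuclideanSpace ℝ (Fin d) → ℂ) (hu : ContDiff ℝ (⊤ : ℕ∞) u) (hsupp : HasCompactSupport u)
    (h : EuclideanSpace ℝ (Fin d) → EuclideanSpace ℝ (Fin d)) (hh : ContDiff ℝ 1 h) :
    (∫ x, ((∑ k : Fin d,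
          fderiv ℝ (fun y => fderiv ℝ u y (EuclideanSpace.single k 1)) x
            (EuclideanSpace.single k 1)) *
        (∑ j : Fin d,
          ((h x j : ℝ) : ℂ) *
            (starRingEnd ℂ) (fderiv ℝ u x (EuclideanSpace.single j 1))))).re =
      -(∑ k : Fin d, ∑ j : Fin d,
          (∫ x, fderiv ℝ u x (EuclideanSpace.single k 1) *
              ((fderiv ℝ (fun y => h y j) x (EuclideanSpace.single k 1) : ℝ) : ℂ) *
              (starRingEnd ℂ) (fderiv ℝ u x (EuclideanSpace.single j 1))).re) +
        (1 / 2) * ∫ x,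
          (∑ k : Fin d, fderiv ℝ (fun y => h y k) x (EuclideanSpace.single k 1)) *
            (∑ k : Fin d, ‖fderiv ℝ u x (EuclideanSpace.single k 1)‖ ^ 2) := by
  classical
  have hu3 : ContDiff ℝ 3 u := hu.of_le (WithTop.coe_le_coe.mpr (le_top : (3:ℕ∞) ≤ ⊤))
  have hHc : ∀ j : Fin d, ContDiff ℝ 1 (fun y => h y j) := fun j =>
    (EuclideanSpace.proj (𝕜 := ℝ) j).contDiff.comp hh
  have hUc : ∀ k : Fin d, ContDiff ℝ 2 fun x => fderiv ℝ u x (EuclideanSpace.single k 1) :=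
    fun k => (hu3.fderiv_right (m := 2) le_rfl).clm_apply contDiff_const
  have hUs : ∀ k : Fin d, HasCompactSupport fun x => fderiv ℝ u x (EuclideanSpace.single k 1) :=
    fun k => hsupp.fderiv_apply ℝ _
  have hCs : ∀ j : Fin d, HasCompactSupport fun x =>
      (starRingEnd ℂ) (fderiv ℝ u x (EuclideanSpace.single j 1)) :=
    fun j => (hUs j).comp_left (by simp)
  have hCc : ∀ j : Fin d, Continuous fun x =>
      (starRingEnd ℂ) (fderiv ℝ u x (EuclideanSpace.single j 1)) :=
    fun j => Complex.continuous_conj.comp (hUc j).continuous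
  have iT : ∀ k j : Fin d, Integrable (fun x =>
      fderiv ℝ (fun y => fderiv ℝ u y (EuclideanSpace.single k 1)) x (EuclideanSpace.single k 1) *
        (((h x j : ℝ) : ℂ) *
          (starRingEnd ℂ) (fderiv ℝ u x (EuclideanSpace.single j 1)))) := by
    intro k j
    apply Continuous.integrable_of_hasCompactSupport
    · exact ((((hUc k).fderiv_right (m := 1) le_rfl).clm_apply contDiff_const).continuous).mul
        ((Complex.continuous_ofReal.comp (hHc j).continuous).mul (hCc j))
    · exact ((hCs j).mul_left).mul_left
  have iS : ∀ k j : Fin d, Integrable (fun x =>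
      fderiv ℝ (fun y => h y j) x (EuclideanSpace.single j 1) *
        ‖fderiv ℝ u x (EuclideanSpace.single k 1)‖ ^ 2) := by
    intro k j
    apply Continuous.integrable_of_hasCompactSupport
    · exact (((hHc j).continuous_fderiv one_ne_zero).clm_apply continuous_const).mul
        (((hUc k).continuous.norm).pow 2)
    · exact ((hUs k).comp_left (g := fun z : ℂ => ‖z‖ ^ 2) (by simp)).mul_left
  have hexp : (∫ x, ((∑ k : Fin d,
        fderiv ℝ (fun y => fderiv ℝ u y (EuclideanSpace.single k 1)) x
          (EuclideanSpace.single k 1)) *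
      (∑ j : Fin d, ((h x j : ℝ) : ℂ) *
        (starRingEnd ℂ) (fderiv ℝ u x (EuclideanSpace.single j 1)))))
      = ∑ k : Fin d, ∑ j : Fin d, ∫ x,
          fderiv ℝ (fun y => fderiv ℝ u y (EuclideanSpace.single k 1)) x
              (EuclideanSpace.single k 1) *
            (((h x j : ℝ) : ℂ) *
              (starRingEnd ℂ) (fderiv ℝ u x (EuclideanSpace.single j 1))) := by
    rw [integral_congr_ae (Filter.Eventually.of_forall
      (fun x => Finset.sum_mul_sum _ _ _ _))]
    rw [integral_finset_sum _ fun k _ => integrable_finset_sum _ fun j _ => iT k j]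
    exact Finset.sum_congr rfl fun k _ => integral_finset_sum _ fun j _ => iT k j
  rw [hexp]
  simp only [Complex.re_sum]
  have hper : ∀ k j : Fin d,
      (∫ x, fderiv ℝ (fun y => fderiv ℝ u y (EuclideanSpace.single k 1)) x
            (EuclideanSpace.single k 1) *
          (((h x j : ℝ) : ℂ) *
            (starRingEnd ℂ) (fderiv ℝ u x (EuclideanSpace.single j 1)))).re
      = -(∫ x, fderiv ℝ u x (EuclideanSpace.single k 1) *
            ((fderiv ℝ (fun y => h y j) x (EuclideanSpace.single k 1) : ℝ) : ℂ) *
            (starRingEnd ℂ) (fderiv ℝ u x (EuclideanSpace.single j 1))).re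
        + (1 / 2) * ∫ x, fderiv ℝ (fun y => h y j) x (EuclideanSpace.single j 1) *
            ‖fderiv ℝ u x (EuclideanSpace.single k 1)‖ ^ 2 :=
    fun k j => perkj hu hsupp (fun y => h y j) (hHc j) _ _
  simp only [hper]
  have hSS : ∫ x, (∑ k : Fin d,
        fderiv ℝ (fun y => h y k) x (EuclideanSpace.single k 1)) *
        (∑ k : Fin d, ‖fderiv ℝ u x (EuclideanSpace.single k 1)‖ ^ 2)
      = ∑ j : Fin d, ∑ k : Fin d, ∫ x,
          fderiv ℝ (fun y => h y j) x (EuclideanSpace.single j 1) *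
            ‖fderiv ℝ u x (EuclideanSpace.single k 1)‖ ^ 2 := by
    rw [integral_congr_ae (Filter.Eventually.of_forall
      (fun x => Finset.sum_mul_sum _ _ _ _))]
    rw [integral_finset_sum _ fun j _ => integrable_finset_sum _ fun k _ => iS k j]
    exact Finset.sum_congr rfl fun j _ => integral_finset_sum _ fun k _ => iS k j
  rw [hSS]
  simp only [Finset.sum_add_distrib, Finset.sum_neg_distrib, ← Finset.mul_sum]
  congr 1
  rw [Finset.sum_comm]
end

section
/- Let p > 2 be real. Let X_Q, Y_Q > 0 satisfy X_Q² = (p/2) Y_Q². Let X > 0, Y > 0, and P ≥ 0 satisfy P ≤ ((p+2)/p) · ((Y² X^{p−2})/(Y_Q² X_Q^{p−2})) · X², and assume (1/2)X² + (1/2)Y² − P/(p+2) < (p/4) Y_Q². Then Y² X^{p−2} < Y_Q² X_Q^{p−2} if and only if X² − (p/(p+2)) P > 0. -/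
/-- The 2D variational equivalence: below the ground-state energy, smallness of the
scale-invariant product `Y² X^{p−2}` relative to that of the ground state is equivalent to
positivity of the virial functional `X² − (p/(p+2)) P`. -/
theorem stmt16 (p : ℝ) (hp : 2 < p)
    (XQ YQ : ℝ) (hXQ : 0 < XQ) (hYQ : 0 < YQ)
    (hQ : XQ ^ 2 = (p / 2) * YQ ^ 2)
    (X Y P : ℝ) (hX : 0 < X) (hY : 0 < Y) (hP : 0 ≤ P)
    (hGN : P ≤ ((p + 2) / p) * ((Y ^ 2 * X ^ (p - 2)) / (YQ ^ 2 * XQ ^ (p - 2))) * X ^ 2)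
    (hJ : (1 / 2) * X ^ 2 + (1 / 2) * Y ^ 2 - P / (p + 2) < (p / 4) * YQ ^ 2) :
    Y ^ 2 * X ^ (p - 2) < YQ ^ 2 * XQ ^ (p - 2) ↔ 0 < X ^ 2 - (p / (p + 2)) * P := by
  have hp0 : 0 < p := by linarith
  have hp2 : 0 < p + 2 := by linarith
  have hXQp : 0 < XQ ^ (p - 2) := Real.rpow_pos_of_pos hXQ _
  have hXp : 0 < X ^ (p - 2) := Real.rpow_pos_of_pos hX _
  have hD : 0 < YQ ^ 2 * XQ ^ (p - 2) := by positivity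
  have hN : 0 < Y ^ 2 * X ^ (p - 2) := by positivity
  constructor
  · intro h
    have h1 : (p / (p + 2)) * P ≤ (Y ^ 2 * X ^ (p - 2)) / (YQ ^ 2 * XQ ^ (p - 2)) * X ^ 2 := by
      calc (p / (p + 2)) * P
          ≤ (p / (p + 2)) * (((p + 2) / p) * ((Y ^ 2 * X ^ (p - 2)) / (YQ ^ 2 * XQ ^ (p - 2))) * X ^ 2) :=
            mul_le_mul_of_nonneg_left hGN (by positivity)
        _ = (Y ^ 2 * X ^ (p - 2)) / (YQ ^ 2 * XQ ^ (p - 2)) * X ^ 2 := by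
            field_simp
    have hr : (Y ^ 2 * X ^ (p - 2)) / (YQ ^ 2 * XQ ^ (p - 2)) < 1 := (div_lt_one hD).mpr h
    have hX2 : 0 < X ^ 2 := by positivity
    nlinarith [mul_lt_of_lt_one_left hX2 hr]
  · intro hK
    by_contra hc
    push_neg at hc
    -- From hK : P/(p+2) < X^2/p
    have hPlt : P / (p + 2) < X ^ 2 / p := by
      rw [div_lt_div_iff₀ hp2 hp0]
      have he : p / (p + 2) * P * (p + 2) = p * P := by field_simp
      nlinarith [mul_pos hK hp2]
    -- scaled variables
    set s := X / XQ with hs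
    have hs0 : 0 < s := div_pos hX hXQ
    set v := Y ^ 2 / YQ ^ 2 with hv
    have hv0 : 0 < v := by positivity
    have hw : s ^ (p - 2) = X ^ (p - 2) / XQ ^ (p - 2) :=
      Real.div_rpow hX.le hXQ.le _
    -- 1 ≤ v * s^(p-2)
    have h1 : 1 ≤ v * s ^ (p - 2) := by
      rw [hw, hv, div_mul_div_comm]
      exact (one_le_div hD).mpr hc
    -- raise to power 2/p
    have h2 : (1 : ℝ) ≤ (v * s ^ (p - 2)) ^ ((2 : ℝ) / p) := by
      have := Real.rpow_le_rpow (by norm_num) h1 (by positivity : (0:ℝ) ≤ 2 / p)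
      rwa [Real.one_rpow] at this
    have h3 : (v * s ^ (p - 2)) ^ ((2 : ℝ) / p)
        = (s ^ 2) ^ ((p - 2) / p) * v ^ ((2 : ℝ) / p) := by
      rw [Real.mul_rpow hv0.le (Real.rpow_nonneg hs0.le _),
          ← Real.rpow_natCast s 2, ← Real.rpow_mul hs0.le, ← Real.rpow_mul hs0.le,
          mul_comm]
      congr 1
      push_cast
      ring
    have hAM : (s ^ 2) ^ ((p - 2) / p) * v ^ ((2 : ℝ) / p)
        ≤ (p - 2) / p * s ^ 2 + 2 / p * v :=
      Real.geom_mean_le_arith_mean2_weighted (div_nonneg (by linarith) hp0.le)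
        (by positivity) (sq_nonneg s) hv0.le (by field_simp; ring)
    have h4 : 1 ≤ (p - 2) / p * s ^ 2 + 2 / p * v := le_trans (h3 ▸ h2) hAM
    have hs2 : s ^ 2 = X ^ 2 / XQ ^ 2 := div_pow X XQ 2
    have h5 : p / 4 * YQ ^ 2 ≤ (p - 2) / (2 * p) * X ^ 2 + 1 / 2 * Y ^ 2 := by
      rw [hs2, hv, hQ] at h4
      have h6 := mul_le_mul_of_nonneg_left h4 (by positivity : (0:ℝ) ≤ p / 4 * YQ ^ 2)
      calc p / 4 * YQ ^ 2 = p / 4 * YQ ^ 2 * 1 := by ring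
        _ ≤ p / 4 * YQ ^ 2 * ((p - 2) / p * (X ^ 2 / (p / 2 * YQ ^ 2)) + 2 / p * (Y ^ 2 / YQ ^ 2)) := h6
        _ = (p - 2) / (2 * p) * X ^ 2 + 1 / 2 * Y ^ 2 := by field_simp; ring
    have h7 : (p - 2) / (2 * p) * X ^ 2 = 1 / 2 * X ^ 2 - X ^ 2 / p := by
      field_simp
    linarith
end
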